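/- (Theorem 3, characteristic-function form.) Fix n ≥ 1, non-zero reals a₁, …, aₙ, start points x₁⁰, …, xₙ⁰ ∈ ℝ, and constants ϱ₁, …, ϱₙ > 0. For each k let (λₖ⁽ᵐ⁾) and (cₖ⁽ᵐ⁾) be sequences of positive reals satisfying Kac's scaling condition with constant ϱₖ. Then for every α ∈ ℝ and every t ≥ 0 the characteristic function of the linear form L(t) = Σₖ aₖXₖ(t) of the n independent telegraph processes, namely exp(iα·Σₖ aₖxₖ⁰)·exp(−(Σₖ λₖ⁽ᵐ⁾)t)·Πₖ H̃(λₖ⁽ᵐ⁾, cₖ⁽ᵐ⁾, aₖα, t) (a complex number), converges as m → ∞ to exp(iα·Σₖ aₖxₖ⁰ − (1/2)(Σₖ ϱₖaₖ²)·α²t), the characteristic function of a homogeneous Wiener process with expectation Σₖ aₖxₖ⁰ and diffusion coefficient Σₖ ϱₖaₖ². -/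

import Mathlib

open Filter

/-- `H̃(λ,c,ξ,t)`: for `|ξ| < λ/c` the hyperbolic branch
`cosh(t√(λ²−c²ξ²)) + (λ/√(λ²−c²ξ²))·sinh(t√(λ²−c²ξ²))`, otherwise the trigonometric branch
`cos(t√(c²ξ²−λ²)) + (λ/√(c²ξ²−λ²))·sin(t√(c²ξ²−λ²))`; `exp(−λt)·H̃(λ,c,ξ,t)` is the
characteristic function of the Goldstein–Kac telegraph process. -/
noncomputable def Htilde (l c ξ t : ℝ) : ℝ :=
  if |ξ| < l / c then
    Real.cosh (t * Real.sqrt (l ^ 2 - c ^ 2 * ξ ^ 2)) +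
      l / Real.sqrt (l ^ 2 - c ^ 2 * ξ ^ 2) *
        Real.sinh (t * Real.sqrt (l ^ 2 - c ^ 2 * ξ ^ 2))
  else
    Real.cos (t * Real.sqrt (c ^ 2 * ξ ^ 2 - l ^ 2)) +
      l / Real.sqrt (c ^ 2 * ξ ^ 2 - l ^ 2) *
        Real.sin (t * Real.sqrt (c ^ 2 * ξ ^ 2 - l ^ 2))

/-!
For large `λ` only the hyperbolic branch of `H̃` occurs. With `s = √(λ² − c²ξ²)`,
`e^{−λt} H̃ = (1 + λ/s)/2 · e^{−(λ−s)t} + (1 − λ/s)/2 · e^{−(λ+s)t}`.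
Under Kac's scaling `λ/s → 1` and `λ − s = c²ξ²/(λ + s) → ϱξ²/2`, so the first term tends to
`e^{−ϱξ²t/2}`, while the second tends to `0` because `t ≥ 0` keeps its exponential below `1`.
Taking the product over the `n` independent components gives the Gaussian limit.
-/
open Real Topology

section Asymptotics

variable {ι : Type*} {F : Filter ι} {l q : ι → ℝ} {κ : ℝ}

lemma tendsto_div_sq_nhds_zero (hl : Tendsto l F atTop)
    (hq : Tendsto (fun i => q i / l i) F (𝓝 κ)) :
    Tendsto (fun i => q i / l i ^ 2) F (𝓝 0) := by
  have h := hq.mul hl.inv_tendsto_atTop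
  rw [mul_zero] at h
  exact h.congr fun i => by rw [Pi.inv_apply]; ring

lemma eventually_lt_sq_of_tendsto_div_sq (hl : Tendsto l F atTop)
    (hq : Tendsto (fun i => q i / l i ^ 2) F (𝓝 0)) :
    ∀ᶠ i in F, q i < l i ^ 2 := by
  filter_upwards [hq.eventually_lt_const one_pos, hl.eventually_gt_atTop 0] with i hi hli
  exact (div_lt_one (by positivity)).mp hi

lemma tendsto_sqrt_sq_sub_div_self (hl : Tendsto l F atTop)
    (hq : Tendsto (fun i => q i / l i ^ 2) F (𝓝 0)) :
    Tendsto (fun i => √(l i ^ 2 - q i) / l i) F (𝓝 1) := by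
  have h : Tendsto (fun i => √(1 - q i / l i ^ 2)) F (𝓝 1) := by
    simpa using (hq.const_sub 1).sqrt
  refine h.congr' ?_
  filter_upwards [hl.eventually_gt_atTop 0] with i hli
  rw [← sqrt_sq hli.le, ← sqrt_div' _ (by positivity), sqrt_sq hli.le, sub_div,
    div_self (by positivity)]

lemma tendsto_sub_sqrt_sq_sub (hl : Tendsto l F atTop)
    (hq : Tendsto (fun i => q i / l i) F (𝓝 κ)) :
    Tendsto (fun i => l i - √(l i ^ 2 - q i)) F (𝓝 (κ / 2)) := by
  have hq0 := tendsto_div_sq_nhds_zero hl hq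
  have h := hq.div ((tendsto_sqrt_sq_sub_div_self hl hq0).const_add 1)
    (by norm_num : (1 : ℝ) + 1 ≠ 0)
  rw [one_add_one_eq_two] at h
  refine h.congr' ?_
  filter_upwards [hl.eventually_gt_atTop 0, eventually_lt_sq_of_tendsto_div_sq hl hq0]
    with i hli hlt
  have hs := sq_sqrt (sub_nonneg.mpr hlt.le)
  show q i / l i / (1 + _ / l i) = _
  field_simp
  linear_combination hs

end Asymptotics

lemma exp_neg_mul_Htilde_eq {l c ξ t : ℝ} (hl : 0 < l) (hc : 0 < c) (h : c ^ 2 * ξ ^ 2 < l ^ 2) :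
    exp (-(l * t)) * Htilde l c ξ t =
      (1 + l / √(l ^ 2 - c ^ 2 * ξ ^ 2)) / 2 * exp (-((l - √(l ^ 2 - c ^ 2 * ξ ^ 2)) * t)) +
        (1 - l / √(l ^ 2 - c ^ 2 * ξ ^ 2)) / 2 * exp (-((l + √(l ^ 2 - c ^ 2 * ξ ^ 2)) * t)) := by
  have hξ : |ξ| < l / c := by
    rw [lt_div_iff₀ hc]
    refine lt_of_pow_lt_pow_left₀ 2 hl.le ?_
    rwa [mul_pow, sq_abs, mul_comm]
  rw [Htilde, if_pos hξ, cosh_eq, sinh_eq]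
  simp only [sub_mul, add_mul, neg_add, neg_sub, exp_add, exp_sub, exp_neg]
  field_simp
  ring

theorem tendsto_exp_neg_mul_Htilde {ι : Type*} {F : Filter ι} {l c : ι → ℝ} {ϱ ξ t : ℝ}
    (ht : 0 ≤ t) (hc : ∀ i, 0 < c i) (hl : Tendsto l F atTop)
    (hKac : Tendsto (fun i => c i ^ 2 / l i) F (𝓝 ϱ)) :
    Tendsto (fun i => exp (-(l i * t)) * Htilde (l i) (c i) ξ t) F
      (𝓝 (exp (-(ϱ * ξ ^ 2 * t / 2)))) := by
  set s := fun i => √(l i ^ 2 - c i ^ 2 * ξ ^ 2)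
  have hq : Tendsto (fun i => c i ^ 2 * ξ ^ 2 / l i) F (𝓝 (ϱ * ξ ^ 2)) :=
    (hKac.mul_const _).congr fun i => div_mul_eq_mul_div _ _ _
  have hq0 := tendsto_div_sq_nhds_zero hl hq
  have hls : Tendsto (fun i => l i / s i) F (𝓝 1) := by
    simpa using (tendsto_sqrt_sq_sub_div_self hl hq0).inv₀ one_ne_zero
  have hslow : Tendsto (fun i => (1 + l i / s i) / 2 * exp (-((l i - s i) * t))) F
      (𝓝 (exp (-(ϱ * ξ ^ 2 * t / 2)))) := by
    have := ((hls.const_add 1).div_const 2).mul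
      (((tendsto_sub_sqrt_sq_sub hl hq).mul_const t).neg.rexp)
    convert this using 2
    ring_nf
  have hfast : Tendsto (fun i => (1 - l i / s i) / 2 * exp (-((l i + s i) * t))) F (𝓝 0) := by
    refine Tendsto.zero_mul_isBoundedUnder_le ?_ (isBoundedUnder_of_eventually_le (a := 1) ?_)
    · simpa using (hls.const_sub 1).div_const 2
    filter_upwards [hl.eventually_gt_atTop 0] with i hli
    have := sqrt_nonneg (l i ^ 2 - c i ^ 2 * ξ ^ 2)
    simp only [Function.comp_apply, norm_eq_abs, abs_exp, exp_le_one_iff, neg_nonpos]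
    positivity
  refine (hslow.add hfast).congr' ?_ |>.trans (by rw [add_zero])
  filter_upwards [hl.eventually_gt_atTop 0, eventually_lt_sq_of_tendsto_div_sq hl hq0]
    with i hli hlt
  exact (exp_neg_mul_Htilde_eq hli (hc i) hlt).symm

theorem stmt_17_general (n : ℕ) (a x0 ϱ : Fin n → ℝ)
    (lam c : Fin n → ℕ → ℝ)
    (hc_pos : ∀ k m, 0 < c k m)
    (hlam : ∀ k, Tendsto (lam k) atTop atTop)
    (hKac : ∀ k, Tendsto (fun m => (c k m) ^ 2 / lam k m) atTop (nhds (ϱ k)))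
    (α t : ℝ) (ht : 0 ≤ t) :
    Tendsto (fun m =>
        Complex.exp (Complex.I * (α : ℂ) * ((∑ k, a k * x0 k : ℝ) : ℂ)) *
          Complex.exp (-((∑ k, lam k m : ℝ) : ℂ) * (t : ℂ)) *
          ∏ k, ((Htilde (lam k m) (c k m) (a k * α) t : ℝ) : ℂ)) atTop
      (nhds (Complex.exp (Complex.I * (α : ℂ) * ((∑ k, a k * x0 k : ℝ) : ℂ) -
        ((1 / 2 : ℝ) : ℂ) * ((∑ k, ϱ k * (a k) ^ 2 : ℝ) : ℂ) * (α : ℂ) ^ 2 * (t : ℂ)))) := by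
  have hprod := tendsto_finsetProd Finset.univ fun k _ =>
    tendsto_exp_neg_mul_Htilde (ξ := a k * α) ht (hc_pos k) (hlam k) (hKac k)
  have hlim := (Complex.continuous_ofReal.tendsto _ |>.comp hprod).const_mul
    (Complex.exp (Complex.I * α * ((∑ k, a k * x0 k : ℝ) : ℂ)))
  convert hlim using 2
  · simp only [Function.comp_apply, Complex.ofReal_prod, Complex.ofReal_mul, Complex.ofReal_exp,
      Finset.prod_mul_distrib, ← Complex.exp_sum, mul_assoc]
    push_cast
    simp only [Finset.sum_neg_distrib, neg_mul, Finset.sum_mul]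
  · simp only [Complex.ofReal_prod, Complex.ofReal_exp, ← Complex.exp_sum, ← Complex.exp_add]
    push_cast
    rw [sub_eq_add_neg, Finset.sum_neg_distrib]
    congr 3
    simp only [Finset.mul_sum, Finset.sum_mul]
    congr 1 with k
    ring

/-- Theorem 3 of the paper in characteristic-function form: under Kac's scaling conditions
(for each `k`: `λₖ⁽ᵐ⁾ → +∞`, `cₖ⁽ᵐ⁾ → +∞`, `(cₖ⁽ᵐ⁾)²/λₖ⁽ᵐ⁾ → ϱₖ > 0`), the characteristic
function of the linear form `L(t) = Σₖ aₖXₖ(t)` of `n` independent telegraph processes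
converges, for every `α ∈ ℝ` and `t ≥ 0`, to the characteristic function of a homogeneous
Wiener process with expectation `Σₖ aₖxₖ⁰` and diffusion coefficient `Σₖ ϱₖaₖ²`. -/
theorem stmt_17 (n : ℕ) (hn : 1 ≤ n) (a x0 ϱ : Fin n → ℝ)
    (ha : ∀ k, a k ≠ 0) (hϱ : ∀ k, 0 < ϱ k)
    (lam c : Fin n → ℕ → ℝ)
    (hlam_pos : ∀ k m, 0 < lam k m) (hc_pos : ∀ k m, 0 < c k m)
    (hlam : ∀ k, Tendsto (lam k) atTop atTop) (hc : ∀ k, Tendsto (c k) atTop atTop)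
    (hKac : ∀ k, Tendsto (fun m => (c k m) ^ 2 / lam k m) atTop (nhds (ϱ k)))
    (α t : ℝ) (ht : 0 ≤ t) :
    Tendsto (fun m =>
        Complex.exp (Complex.I * (α : ℂ) * ((∑ k, a k * x0 k : ℝ) : ℂ)) *
          Complex.exp (-((∑ k, lam k m : ℝ) : ℂ) * (t : ℂ)) *
          ∏ k, ((Htilde (lam k m) (c k m) (a k * α) t : ℝ) : ℂ)) atTop
      (nhds (Complex.exp (Complex.I * (α : ℂ) * ((∑ k, a k * x0 k : ℝ) : ℂ) -
        ((1 / 2 : ℝ) : ℂ) * ((∑ k, ϱ k * (a k) ^ 2 : ℝ) : ℂ) * (α : ℂ) ^ 2 * (t : ℂ)))) :=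
  stmt_17_general n a x0 ϱ lam c hc_pos hlam hKac α t ht
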